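/- Let n ≥ 1, let B be an n×n complex matrix, let C₁, C₂ > 0, let η̂ < η be real numbers with η > 0, and let M ∈ ℝ. Assume ‖exp(tB)‖ ≤ C₁e^{η̂ t} for all t ≥ 0, and let E : ℝ → (n×n complex matrices) be continuous with ‖E(y)‖ ≤ C₂e^{η y} for all y ≤ M. Fix V₋ ∈ ℂⁿ and define, for bounded continuous U : (−∞, M] → ℂⁿ, N(U)(x) = V₋ + ∫_{−∞}^{x} exp((x−y)B) E(y) U(y) dy. Set q = C₁C₂ e^{ηM}/(η − η̂) and assume q < 1. Then N has a unique fixed point U* among bounded continuous functions on (−∞, M], and it satisfies sup_{x ≤ M} ‖U*(x) − V₋‖ ≤ (q/(1−q)) ‖V₋‖. -/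

import Mathlib

open scoped Matrix.Norms.L2Operator

open MeasureTheory Set
open scoped BoundedContinuousFunction

/-!
For `y ≤ x ≤ M` the Duhamel kernel satisfies
`‖exp((x-y)B) E(y)‖ ≤ C₁C₂ e^{η̂x} e^{(η-η̂)y}`, whose integral over `y ≤ x` is
`C₁C₂ e^{ηx}/(η-η̂) ≤ q`. Hence `N` is affine with linear part of norm at most `q` on bounded
continuous functions on `(-∞, M]`. Freezing functions at their value at `M` beyond `M` turns
`N` into a contraction of the Banach space `ℝ →ᵇ ℂⁿ`, so Banach's fixed-point theorem applies,
and its a priori estimate started at the constant `V₋` gives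
`‖U* - V₋‖ ≤ ‖N V₋ - V₋‖/(1-q) ≤ q‖V₋‖/(1-q)`.
Continuity of `x ↦ N U x` follows from `exp((x-y)B) = exp(xB) exp(-yB)`: the dependence on `x`
then sits in a continuous prefactor and in the upper limit of a convergent integral.
-/

theorem integrableOn_Iic_of_norm_le_mul_exp {F : Type*} [NormedAddCommGroup F] {f : ℝ → F}
    {a κ x : ℝ} (hκ : 0 < κ) (hf : AEStronglyMeasurable f (volume.restrict (Iic x)))
    (hfa : ∀ y ≤ x, ‖f y‖ ≤ a * Real.exp (κ * y)) : IntegrableOn f (Iic x) :=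
  ((integrableOn_exp_mul_Iic hκ x).const_mul a).mono' hf <|
    (ae_restrict_mem measurableSet_Iic).mono fun y hy => hfa y hy

theorem norm_integral_Iic_le_of_norm_le_mul_exp {F : Type*} [NormedAddCommGroup F]
    [NormedSpace ℝ F] {f : ℝ → F} {a κ x : ℝ} (hκ : 0 < κ)
    (hfa : ∀ y ≤ x, ‖f y‖ ≤ a * Real.exp (κ * y)) :
    ‖∫ y in Iic x, f y‖ ≤ a * Real.exp (κ * x) / κ := by
  rw [mul_div_assoc, ← integral_exp_mul_Iic hκ, ← integral_const_mul]
  exact norm_integral_le_of_norm_le ((integrableOn_exp_mul_Iic hκ x).const_mul a) <|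
    (ae_restrict_mem measurableSet_Iic).mono fun y hy => hfa y hy

namespace BoundedContinuousFunction

variable {E : Type*} [NormedAddCommGroup E]

def extendFromIic (M : ℝ) (f : ℝ → E) (hf : ContinuousOn f (Iic M)) (C : ℝ)
    (hC : ∀ x ≤ M, ‖f x‖ ≤ C) : ℝ →ᵇ E :=
  ofNormedAddCommGroup (fun x => f (min x M))
    (hf.comp_continuous (continuous_id.min continuous_const) fun x => min_le_right x M) C
    fun x => hC _ (min_le_right x M)

variable {M : ℝ} {f : ℝ → E} {hf : ContinuousOn f (Iic M)} {C : ℝ} {hC : ∀ x ≤ M, ‖f x‖ ≤ C}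

@[simp]
lemma extendFromIic_apply (x : ℝ) : extendFromIic M f hf C hC x = f (min x M) :=
  rfl

lemma extendFromIic_apply_of_le {x : ℝ} (hx : x ≤ M) : extendFromIic M f hf C hC x = f x := by
  rw [extendFromIic_apply, min_eq_left hx]

end BoundedContinuousFunction

open BoundedContinuousFunction in
theorem exists_unique_fixedPoint_on_Iic {E : Type*} [NormedAddCommGroup E] [CompleteSpace E]
    {N : (ℝ → E) → ℝ → E} {M q d : ℝ} {V : E} (hq : 0 ≤ q) (hq1 : q < 1)
    (hcont : ∀ f : ℝ →ᵇ E, ContinuousOn (N f) (Iic M))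
    (hlip : ∀ f g : ℝ →ᵇ E, ∀ x ≤ M, ‖N f x - N g x‖ ≤ q * dist f g)
    (hlocal : ∀ f g : ℝ → E, EqOn f g (Iic M) → ∀ x ≤ M, N f x = N g x)
    (hV : ∀ x ≤ M, ‖N (fun _ => V) x - V‖ ≤ d) :
    ∃ U : ℝ → E,
      ContinuousOn U (Iic M) ∧ (∃ C, ∀ x ≤ M, ‖U x‖ ≤ C) ∧
      (∀ x ≤ M, N U x = U x) ∧
      (∀ x ≤ M, ‖U x - V‖ ≤ d / (1 - q)) ∧
      ∀ U' : ℝ → E,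
        ContinuousOn U' (Iic M) → (∃ C, ∀ x ≤ M, ‖U' x‖ ≤ C) →
        (∀ x ≤ M, N U' x = U' x) → ∀ x ≤ M, U' x = U x := by
  set V₀ := const ℝ V
  have hbound (f : ℝ →ᵇ E) (x : ℝ) (hx : x ≤ M) : ‖N f x‖ ≤ ‖V‖ + d + q * dist f V₀ :=
    calc ‖N f x‖ = ‖V + (N V₀ x - V) + (N f x - N V₀ x)‖ := by congr 1; abel
      _ ≤ ‖V‖ + ‖N V₀ x - V‖ + ‖N f x - N V₀ x‖ := norm_add₃_le
      _ ≤ ‖V‖ + d + q * dist f V₀ :=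
          add_le_add (add_le_add le_rfl (hV x hx)) (hlip f V₀ x hx)
  let T (f : ℝ →ᵇ E) : ℝ →ᵇ E := extendFromIic M (N f) (hcont f) _ (hbound f)
  have hT : ContractingWith q.toNNReal T := by
    refine ⟨by simpa [← NNReal.coe_lt_coe, hq] using hq1, .of_dist_le_mul fun f g => ?_⟩
    rw [Real.coe_toNNReal q hq, dist_le (by positivity)]
    intro x
    rw [dist_eq_norm]
    exact hlip f g _ (min_le_right x M)
  set U := hT.fixedPoint T
  have hfix : ∀ x ≤ M, N U x = U x := fun x hx => by
    rw [← extendFromIic_apply_of_le (hf := hcont U) (hC := hbound U) hx]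
    exact congrArg (· x) hT.fixedPoint_isFixedPt
  refine ⟨U, U.continuous.continuousOn, ⟨‖U‖, fun x _ => U.norm_coe_le_norm x⟩, hfix,
    fun x hx => ?_, fun U' hU' ⟨C, hC⟩ hU'fix x hx => ?_⟩
  · have hV₀ : dist V₀ (T V₀) ≤ d := by
      rw [dist_le ((norm_nonneg _).trans (hV M le_rfl))]
      intro y
      rw [dist_comm, dist_eq_norm]
      exact hV _ (min_le_right y M)
    calc ‖U x - V‖ = dist (U x) (V₀ x) := (dist_eq_norm _ _).symm
      _ ≤ dist V₀ U := by rw [dist_comm]; exact dist_coe_le_dist x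
      _ ≤ dist V₀ (T V₀) / (1 - q) := by
          simpa [Real.coe_toNNReal q hq] using hT.dist_fixedPoint_le V₀
      _ ≤ d / (1 - q) := by gcongr
  · set W := extendFromIic M U' hU' C hC
    have hW : Function.IsFixedPt T W := ext fun y => by
      have hyM := min_le_right y M
      rw [extendFromIic_apply, extendFromIic_apply,
        hlocal W U' (fun z hz => extendFromIic_apply_of_le hz) _ hyM, hU'fix _ hyM]
    rw [← extendFromIic_apply_of_le (hf := hU') (hC := hC) hx]
    exact congrArg (· x) (hT.fixedPoint_unique hW)

section DuhamelKernel

variable {ι : Type*} [Fintype ι] [DecidableEq ι]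

theorem Matrix.continuous_toEuclideanCLM {𝕜 : Type*} [RCLike 𝕜] :
    Continuous (Matrix.toEuclideanCLM (n := ι) (𝕜 := 𝕜)) :=
  (AddMonoidHomClass.isometry_of_norm _ Matrix.l2_opNorm_toEuclideanCLM).continuous

theorem Matrix.continuous_exp_ofReal_smul (B : Matrix ι ι ℂ) :
    Continuous fun t : ℝ => NormedSpace.exp ((t : ℂ) • B) :=
  (continuous_iff_continuousAt.2 fun t => (hasDerivAt_exp_smul_const B t).continuousAt).comp
    Complex.continuous_ofReal

variable (B : Matrix ι ι ℂ) (E : ℝ → Matrix ι ι ℂ)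

noncomputable def duhamelKernel (x y : ℝ) : EuclideanSpace ℂ ι →L[ℂ] EuclideanSpace ℂ ι :=
  Matrix.toEuclideanCLM (𝕜 := ℂ) (NormedSpace.exp (((x - y : ℝ) : ℂ) • B) * E y)

theorem duhamelKernel_eq_mul (x x' y : ℝ) :
    duhamelKernel B E x y =
      Matrix.toEuclideanCLM (𝕜 := ℂ) (NormedSpace.exp (((x - x' : ℝ) : ℂ) • B)) *
        duhamelKernel B E x' y := by
  rw [duhamelKernel, duhamelKernel, ← map_mul, ← mul_assoc, ← Matrix.exp_add_of_commute]
  · rw [← add_smul]; push_cast; ring_nf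
  · exact ((Commute.refl B).smul_left _).smul_right _

variable {B E}

theorem continuous_duhamelKernel_apply (hE : Continuous E) {W : ℝ → EuclideanSpace ℂ ι}
    (hW : Continuous W) (x : ℝ) : Continuous fun y => duhamelKernel B E x y (W y) :=
  (Matrix.continuous_toEuclideanCLM.comp <|
    ((Matrix.continuous_exp_ofReal_smul B).comp (continuous_sub_left x)).mul hE).clm_apply hW

variable {C₁ C₂ ηhat η M : ℝ}
  (hB : ∀ t : ℝ, 0 ≤ t → ‖NormedSpace.exp ((t : ℂ) • B)‖ ≤ C₁ * Real.exp (ηhat * t))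
  (hEbnd : ∀ y : ℝ, y ≤ M → ‖E y‖ ≤ C₂ * Real.exp (η * y))
include hB hEbnd

theorem norm_duhamelKernel_apply_le {W : ℝ → EuclideanSpace ℂ ι} {c x y : ℝ}
    (hc : ∀ y ≤ M, ‖W y‖ ≤ c) (hyx : y ≤ x) (hxM : x ≤ M) :
    ‖duhamelKernel B E x y (W y)‖ ≤
      C₁ * C₂ * Real.exp (ηhat * x) * c * Real.exp ((η - ηhat) * y) := by
  have hK : ‖duhamelKernel B E x y‖ ≤ C₁ * Real.exp (ηhat * (x - y)) * (C₂ * Real.exp (η * y)) :=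
    norm_mul_le_of_le (hB _ (sub_nonneg.2 hyx)) (hEbnd y (hyx.trans hxM))
  calc ‖duhamelKernel B E x y (W y)‖
      ≤ C₁ * Real.exp (ηhat * (x - y)) * (C₂ * Real.exp (η * y)) * c :=
        (duhamelKernel B E x y).le_of_opNorm_le_of_le hK (hc y (hyx.trans hxM))
    _ = C₁ * C₂ * Real.exp (ηhat * x) * c * Real.exp ((η - ηhat) * y) := by
        rw [mul_sub, Real.exp_sub, sub_mul, Real.exp_sub]; field_simp

variable (hηη : ηhat < η) (hE : Continuous E)
include hηη hE

theorem integrableOn_duhamelKernel_apply {W : ℝ → EuclideanSpace ℂ ι} (hW : Continuous W)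
    {c x : ℝ} (hc : ∀ y ≤ M, ‖W y‖ ≤ c) (hxM : x ≤ M) :
    IntegrableOn (fun y => duhamelKernel B E x y (W y)) (Iic x) :=
  integrableOn_Iic_of_norm_le_mul_exp (sub_pos.2 hηη)
    (continuous_duhamelKernel_apply hE hW x).aestronglyMeasurable
    fun _ hyx => norm_duhamelKernel_apply_le hB hEbnd hc hyx hxM

omit hE in
theorem norm_integral_duhamelKernel_apply_le (hC₁ : 0 ≤ C₁) (hC₂ : 0 ≤ C₂) (hη : 0 ≤ η)
    {W : ℝ → EuclideanSpace ℂ ι} {c x : ℝ} (hc : ∀ y ≤ M, ‖W y‖ ≤ c) (hxM : x ≤ M) :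
    ‖∫ y in Iic x, duhamelKernel B E x y (W y)‖ ≤
      C₁ * C₂ * Real.exp (η * M) / (η - ηhat) * c := by
  have hc0 : 0 ≤ c := (norm_nonneg _).trans (hc M le_rfl)
  calc ‖∫ y in Iic x, duhamelKernel B E x y (W y)‖
      ≤ C₁ * C₂ * Real.exp (ηhat * x) * c * Real.exp ((η - ηhat) * x) / (η - ηhat) :=
        norm_integral_Iic_le_of_norm_le_mul_exp (sub_pos.2 hηη)
          fun _ hyx => norm_duhamelKernel_apply_le hB hEbnd hc hyx hxM
    _ = C₁ * C₂ * Real.exp (η * x) / (η - ηhat) * c := by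
        have hexp : Real.exp (ηhat * x) * Real.exp ((η - ηhat) * x) = Real.exp (η * x) := by
          rw [← Real.exp_add]; ring_nf
        rw [← hexp]; ring
    _ ≤ C₁ * C₂ * Real.exp (η * M) / (η - ηhat) * c := by
        have hκ := sub_pos.2 hηη
        gcongr

theorem continuousOn_integral_duhamelKernel_apply {W : ℝ → EuclideanSpace ℂ ι}
    (hW : Continuous W) {c : ℝ} (hc : ∀ y ≤ M, ‖W y‖ ≤ c) :
    ContinuousOn (fun x => ∫ y in Iic x, duhamelKernel B E x y (W y)) (Iic M) := by
  have hint : IntegrableOn (fun y => duhamelKernel B E 0 y (W y)) (Iic M) := by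
    simpa only [IntegrableOn, ← mul_apply_eq_comp, ← duhamelKernel_eq_mul] using
      (Matrix.toEuclideanCLM (𝕜 := ℂ) (NormedSpace.exp (((0 - M : ℝ) : ℂ) • B))).integrable_comp
        (integrableOn_duhamelKernel_apply hB hEbnd hηη hE hW hc le_rfl)
  have hA : Continuous fun x : ℝ =>
      Matrix.toEuclideanCLM (𝕜 := ℂ) (NormedSpace.exp (((x - 0 : ℝ) : ℂ) • B)) :=
    Matrix.continuous_toEuclideanCLM.comp
      ((Matrix.continuous_exp_ofReal_smul B).comp (continuous_sub_right 0))
  refine (hA.continuousOn.clm_apply hint.continuousOn_Iic_primitive_Iic).congr fun x hx => ?_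
  simp only [duhamelKernel_eq_mul B E x 0, mul_apply_eq_comp]
  exact ContinuousLinearMap.integral_comp_comm _ (hint.mono_set (Iic_subset_Iic.2 hx))

variable (B E) in
noncomputable def duhamelOperator (V : EuclideanSpace ℂ ι) (U : ℝ → EuclideanSpace ℂ ι) (x : ℝ) :
    EuclideanSpace ℂ ι :=
  V + ∫ y in Iic x, duhamelKernel B E x y (U y)

theorem continuousOn_duhamelOperator (V : EuclideanSpace ℂ ι) (f : ℝ →ᵇ EuclideanSpace ℂ ι) :
    ContinuousOn (duhamelOperator B E V f) (Iic M) :=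
  continuousOn_const.add <| continuousOn_integral_duhamelKernel_apply hB hEbnd hηη hE
    f.continuous fun y _ => f.norm_coe_le_norm y

theorem norm_duhamelOperator_sub_le (hC₁ : 0 ≤ C₁) (hC₂ : 0 ≤ C₂) (hη : 0 ≤ η)
    (V : EuclideanSpace ℂ ι) (f g : ℝ →ᵇ EuclideanSpace ℂ ι) {x : ℝ} (hxM : x ≤ M) :
    ‖duhamelOperator B E V f x - duhamelOperator B E V g x‖ ≤
      C₁ * C₂ * Real.exp (η * M) / (η - ηhat) * dist f g := by
  have hint (h : ℝ →ᵇ EuclideanSpace ℂ ι) := integrableOn_duhamelKernel_apply hB hEbnd hηη hE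
    h.continuous (fun y _ => h.norm_coe_le_norm y) hxM
  rw [duhamelOperator, duhamelOperator, add_sub_add_left_eq_sub, ← integral_sub (hint f) (hint g)]
  simp only [← map_sub]
  exact norm_integral_duhamelKernel_apply_le hB hEbnd hηη hC₁ hC₂ hη
    (fun y _ => dist_eq_norm f g ▸ (f - g).norm_coe_le_norm y) hxM

omit hE in
theorem norm_duhamelOperator_const_sub_le (hC₁ : 0 ≤ C₁) (hC₂ : 0 ≤ C₂) (hη : 0 ≤ η)
    (V : EuclideanSpace ℂ ι) {x : ℝ} (hxM : x ≤ M) :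
    ‖duhamelOperator B E V (fun _ => V) x - V‖ ≤
      C₁ * C₂ * Real.exp (η * M) / (η - ηhat) * ‖V‖ := by
  rw [duhamelOperator, add_sub_cancel_left]
  exact norm_integral_duhamelKernel_apply_le hB hEbnd hηη hC₁ hC₂ hη (fun _ _ => le_rfl) hxM

end DuhamelKernel

theorem duhamelOperator_congr {ι : Type*} [Fintype ι] [DecidableEq ι] (B : Matrix ι ι ℂ)
    (E : ℝ → Matrix ι ι ℂ) (V : EuclideanSpace ℂ ι) {M : ℝ} {f g : ℝ → EuclideanSpace ℂ ι}
    (hfg : EqOn f g (Iic M)) {x : ℝ} (hxM : x ≤ M) :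
    duhamelOperator B E V f x = duhamelOperator B E V g x := by
  rw [duhamelOperator, duhamelOperator,
    setIntegral_congr_fun measurableSet_Iic fun y hy => by rw [hfg (mem_Iic.2 (hy.trans hxM))]]

theorem duhamel_fixed_point_general
    (n : ℕ)
    (B : Matrix (Fin n) (Fin n) ℂ)
    (C₁ C₂ : ℝ) (hC₁ : 0 < C₁) (hC₂ : 0 < C₂)
    (ηhat η : ℝ) (hηη : ηhat < η) (hη : 0 < η)
    (M : ℝ)
    (hB : ∀ t : ℝ, 0 ≤ t → ‖NormedSpace.exp ((t : ℂ) • B)‖ ≤ C₁ * Real.exp (ηhat * t))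
    (Emat : ℝ → Matrix (Fin n) (Fin n) ℂ)
    (hEcont : Continuous Emat)
    (hEbnd : ∀ y : ℝ, y ≤ M → ‖Emat y‖ ≤ C₂ * Real.exp (η * y))
    (Vm : EuclideanSpace ℂ (Fin n))
    (N : (ℝ → EuclideanSpace ℂ (Fin n)) → ℝ → EuclideanSpace ℂ (Fin n))
    (hN : ∀ (U : ℝ → EuclideanSpace ℂ (Fin n)) (x : ℝ),
      N U x = Vm + ∫ y in Set.Iic x,
        (Matrix.toEuclideanCLM (𝕜 := ℂ)
          (NormedSpace.exp (((x - y : ℝ) : ℂ) • B) * Emat y)) (U y))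
    (q : ℝ) (hq : q = C₁ * C₂ * Real.exp (η * M) / (η - ηhat)) (hq1 : q < 1) :
    ∃ U : ℝ → EuclideanSpace ℂ (Fin n),
      ContinuousOn U (Set.Iic M) ∧ (∃ C, ∀ x ≤ M, ‖U x‖ ≤ C) ∧
      (∀ x ≤ M, N U x = U x) ∧
      (∀ x ≤ M, ‖U x - Vm‖ ≤ q / (1 - q) * ‖Vm‖) ∧
      ∀ U' : ℝ → EuclideanSpace ℂ (Fin n),
        ContinuousOn U' (Set.Iic M) → (∃ C, ∀ x ≤ M, ‖U' x‖ ≤ C) →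
        (∀ x ≤ M, N U' x = U' x) → ∀ x ≤ M, U' x = U x := by
  obtain rfl : N = duhamelOperator B Emat Vm := funext fun U => funext (hN U)
  subst hq
  have hq0 : 0 ≤ C₁ * C₂ * Real.exp (η * M) / (η - ηhat) :=
    div_nonneg (by positivity) (sub_pos.2 hηη).le
  simpa only [mul_div_right_comm] using exists_unique_fixedPoint_on_Iic hq0 hq1
    (continuousOn_duhamelOperator hB hEbnd hηη hEcont Vm)
    (norm_duhamelOperator_sub_le hB hEbnd hηη hEcont hC₁.le hC₂.le hη.le Vm)
    (fun f g hfg x hx => duhamelOperator_congr B Emat Vm hfg hx)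
    (fun x hx => norm_duhamelOperator_const_sub_le hB hEbnd hηη hC₁.le hC₂.le hη.le Vm hx)

/-- Fixed point of the Duhamel operator: if `q = C₁C₂ e^{ηM}/(η − η̂) < 1`, then
`N(U)(x) = V₋ + ∫_{−∞}^x exp((x−y)B) E(y) U(y) dy` has a unique fixed point `U*` among
bounded continuous functions on `(−∞, M]`, and `sup_{x ≤ M} ‖U*(x) − V₋‖ ≤ (q/(1−q))‖V₋‖`.
All norms are Euclidean (ℓ²) norms. -/
theorem duhamel_fixed_point
    (n : ℕ) (hn : 1 ≤ n)
    (B : Matrix (Fin n) (Fin n) ℂ)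
    (C₁ C₂ : ℝ) (hC₁ : 0 < C₁) (hC₂ : 0 < C₂)
    (ηhat η : ℝ) (hηη : ηhat < η) (hη : 0 < η)
    (M : ℝ)
    (hB : ∀ t : ℝ, 0 ≤ t → ‖NormedSpace.exp ((t : ℂ) • B)‖ ≤ C₁ * Real.exp (ηhat * t))
    (Emat : ℝ → Matrix (Fin n) (Fin n) ℂ)
    (hEcont : Continuous Emat)
    (hEbnd : ∀ y : ℝ, y ≤ M → ‖Emat y‖ ≤ C₂ * Real.exp (η * y))
    (Vm : EuclideanSpace ℂ (Fin n))
    (N : (ℝ → EuclideanSpace ℂ (Fin n)) → ℝ → EuclideanSpace ℂ (Fin n))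
    (hN : ∀ (U : ℝ → EuclideanSpace ℂ (Fin n)) (x : ℝ),
      N U x = Vm + ∫ y in Set.Iic x,
        (Matrix.toEuclideanCLM (𝕜 := ℂ)
          (NormedSpace.exp (((x - y : ℝ) : ℂ) • B) * Emat y)) (U y))
    (q : ℝ) (hq : q = C₁ * C₂ * Real.exp (η * M) / (η - ηhat)) (hq1 : q < 1) :
    ∃ U : ℝ → EuclideanSpace ℂ (Fin n),
      ContinuousOn U (Set.Iic M) ∧ (∃ C, ∀ x ≤ M, ‖U x‖ ≤ C) ∧
      (∀ x ≤ M, N U x = U x) ∧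
      (∀ x ≤ M, ‖U x - Vm‖ ≤ q / (1 - q) * ‖Vm‖) ∧
      ∀ U' : ℝ → EuclideanSpace ℂ (Fin n),
        ContinuousOn U' (Set.Iic M) → (∃ C, ∀ x ≤ M, ‖U' x‖ ≤ C) →
        (∀ x ≤ M, N U' x = U' x) → ∀ x ≤ M, U' x = U x :=
  duhamel_fixed_point_general n B C₁ C₂ hC₁ hC₂ ηhat η hηη hη M hB Emat hEcont hEbnd Vm N hN q hq
    hq1
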